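/- arXiv:1810.10950 — 6 statements merged into one kernel-verified Lean document; each statement's English description precedes it below -/
import Mathlib

section
/- Let p be a prime, D a finite abelian p-group, E a subgroup of Aut(D) whose order is coprime to p, and G = D ⋊ E the semidirect product formed via the inclusion of E into Aut(D). Then Out(G) is isomorphic to N_{Aut(D)}(E)/E. Moreover, an isomorphism is induced by the map which sends α ∈ N_{Aut(D)}(E) to the class in Out(G) of the automorphism of G given by (d, e) ↦ (α(d), α∘e∘α^{-1}). -/
/-- The subgroup of inner automorphisms of a group. -/
def Inn (G : Type*) [Group G] : Subgroup (MulAut G) :=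
  (MulAut.conj : G →* MulAut G).range

instance Inn.normal (G : Type*) [Group G] : (Inn G).Normal := by
  constructor
  rintro f ⟨g, rfl⟩ β
  refine ⟨β g, ?_⟩
  ext x
  simp [MulAut.conj_apply, MulAut.mul_apply, map_mul, mul_assoc]

/-- The outer automorphism group of a group. -/
abbrev Out (G : Type*) [Group G] := MulAut G ⧸ Inn G

/-!
Every `α ∈ N(E)` acts on `D ⋊ E` by `(d, e) ↦ (α d, α e α⁻¹)`; this is inner exactly when
`α ∈ E`, because `D` is abelian. Conversely, let `ψ` be an automorphism of `D ⋊ E`. Since `|E|` is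
prime to `p`, the elements of `D` are exactly the `p`-elements, so `ψ` restricts to some `α` on
`D`. Writing `ψ (1, e) = (f e, τ e)`, the map `f` is a `1`-cocycle of `E` with values in `D`, and
averaging over `E` (possible as `|E|`-th roots exist in `D`) shows that it is a coboundary. So
after composing `ψ` with an inner automorphism by an element of `D`, it fixes `E` setwise, and
it is then the automorphism induced by `α`, which must normalize `E`.
-/

open Subgroup

theorem eq_one_of_pow_pow_eq_one_of_coprime {G : Type*} [Group G] {p k : ℕ}
    (hG : (Nat.card G).Coprime p) {g : G} (hg : g ^ p ^ k = 1) : g = 1 :=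
  orderOf_eq_one_iff.mp <|
    Nat.eq_one_of_dvd_coprimes (hG.pow_right k) (orderOf_dvd_natCard g)
      (orderOf_dvd_of_pow_eq_one hg)

open Finset in
theorem IsPGroup.exists_eq_mul_inv_of_cocycle {G N : Type*} [Group G] [Finite G] [CommGroup N]
    {p : ℕ} (hN : IsPGroup p N) (hG : (Nat.card G).Coprime p) (σ : G →* MulAut N) (f : G → N)
    (hf : ∀ a b, f (a * b) = f a * σ a (f b)) : ∃ n, ∀ g, f g = σ g n * n⁻¹ := by
  cases nonempty_fintype G
  set P := ∏ g, f g
  have hP : ∀ a, f a ^ Nat.card G * σ a P = P := fun a => calc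
    f a ^ Nat.card G * σ a P = ∏ g, f (a * g) := by
      simp only [P, hf, prod_mul_distrib, prod_const, card_univ, Nat.card_eq_fintype_card,
        map_prod]
    _ = P := Equiv.prod_comp (Equiv.mulLeft a) f
  set r := (hN.powEquiv hG.symm).symm P
  have hr : r ^ Nat.card G = P := (hN.powEquiv hG.symm).apply_symm_apply P
  refine ⟨r⁻¹, fun a => (hN.powEquiv hG.symm).injective ?_⟩
  simp only [powEquiv_apply, mul_pow, inv_inv, inv_pow, ← map_pow, hr, map_inv]
  rw [eq_mul_inv_of_mul_eq (hP a), mul_comm]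

namespace SemidirectProduct

section

variable {N G : Type*} [Group N] [Group G] {φ : G →* MulAut N}

theorem mulAut_ext {χ χ' : MulAut (N ⋊[φ] G)} (hl : ∀ n, χ (inl n) = χ' (inl n))
    (hr : ∀ g, χ (inr g) = χ' (inr g)) : χ = χ' :=
  MulEquiv.toMonoidHom_injective <| hom_ext (MonoidHom.ext hl) (MonoidHom.ext hr)

theorem exists_mulAut_map_inl [Finite N] (χ : MulAut (N ⋊[φ] G))
    (hχ : ∀ n, (χ (inl n)).right = 1) : ∃ α : MulAut N, ∀ n, χ (inl n) = inl (α n) := by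
  have hinl : ∀ n, χ (inl n) = inl (χ (inl n)).left := fun n => SemidirectProduct.ext rfl (hχ n)
  let f : N →* N :=
    { toFun n := (χ (inl n)).left
      map_one' := by simp
      map_mul' n₁ n₂ := by simp [hχ] }
  have hf : Function.Injective f := fun n₁ n₂ h =>
    inl_injective <| χ.injective <| by rw [hinl n₁, hinl n₂]; exact congrArg inl h
  exact ⟨MulEquiv.ofBijective f (Finite.injective_iff_bijective.mp hf), hinl⟩

theorem right_mulAut_inl_eq_one {p : ℕ} (hN : IsPGroup p N)
    (hG : (Nat.card G).Coprime p) (χ : MulAut (N ⋊[φ] G)) (n : N) : (χ (inl n)).right = 1 := by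
  obtain ⟨k, hk⟩ := hN n
  refine eq_one_of_pow_pow_eq_one_of_coprime hG (k := k) ?_
  simpa [map_pow] using congrArg (fun m => rightHom (χ (inl m))) hk

end

section

variable {N : Type*} [Group N] (E : Subgroup (MulAut N))

def normalizerMulAut : normalizer (E : Set (MulAut N)) →* MulAut (N ⋊[E.subtype] E) where
  toFun α := congr (α : MulAut N) (E.normalizerMonoidHom α) fun e => by
    ext n; simp [MulAut.mul_apply]
  map_one' := by ext <;> simp
  map_mul' α β := by ext <;> simp [MulAut.mul_apply]

variable {E}

@[simp]
theorem normalizerMulAut_apply_left (α : normalizer (E : Set (MulAut N)))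
    (x : N ⋊[E.subtype] E) : (normalizerMulAut E α x).left = (α : MulAut N) x.left := rfl

@[simp]
theorem coe_normalizerMulAut_apply_right (α : normalizer (E : Set (MulAut N)))
    (x : N ⋊[E.subtype] E) :
    ((normalizerMulAut E α x).right : MulAut N) = α * x.right * (α : MulAut N)⁻¹ := rfl

theorem normalizerMulAut_of_mem {α : normalizer (E : Set (MulAut N))} (hα : (α : MulAut N) ∈ E) :
    normalizerMulAut E α = MulAut.conj (inr ⟨α, hα⟩) := by
  refine mulAut_ext (fun n => ?_) (fun e => ?_) <;> ext <;> simp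

theorem exists_eq_normalizerMulAut [Finite E] {χ : MulAut (N ⋊[E.subtype] E)} {α : MulAut N}
    (hl : ∀ n, χ (inl n) = inl (α n)) (hr : ∀ e, (χ (inr e)).left = 1) :
    ∃ hα : α ∈ normalizer (E : Set (MulAut N)), χ = normalizerMulAut E ⟨α, hα⟩ := by
  set τ : E →* E := rightHom.comp (χ.toMonoidHom.comp inr)
  have hτ : ∀ e, χ (inr e) = inr (τ e) := fun e => SemidirectProduct.ext (hr e) rfl
  have hconj : ∀ e : E, (τ e : MulAut N) = α * e * α⁻¹ := by
    refine fun e => eq_mul_inv_of_mul_eq <|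
      MulEquiv.ext fun m => inl_injective (φ := E.subtype) ?_
    have h := congrArg χ (inl_aut (φ := E.subtype) e m)
    rw [map_mul, map_mul, hl, hl, hτ, hτ, map_inv, ← inl_aut] at h
    exact h.symm
  refine ⟨mem_normalizer_fintype fun e he => hconj ⟨e, he⟩ ▸ (τ ⟨e, he⟩).2, ?_⟩
  refine mulAut_ext (fun n => ?_) (fun e => ?_)
  · ext <;> simp [hl]
  · ext <;> simp [hτ, hconj]

end

section

variable {N : Type*} [CommGroup N] {E : Subgroup (MulAut N)}

theorem mem_of_normalizerMulAut_eq_conj {α : normalizer (E : Set (MulAut N))}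
    {x : N ⋊[E.subtype] E} (h : normalizerMulAut E α = MulAut.conj x) : (α : MulAut N) ∈ E := by
  suffices (α : MulAut N) = x.right from this ▸ x.right.2
  ext n
  simpa [mul_comm] using congrArg (fun χ : MulAut (N ⋊[E.subtype] E) => (χ (inl n)).left) h

variable (E) in
theorem ker_mk'_comp_normalizerMulAut :
    ((QuotientGroup.mk' (Inn (N ⋊[E.subtype] E))).comp (normalizerMulAut E)).ker =
      E.subgroupOf (normalizer (E : Set (MulAut N))) := by
  ext α
  simp only [MonoidHom.mem_ker, MonoidHom.comp_apply, QuotientGroup.mk'_apply,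
    QuotientGroup.eq_one_iff, mem_subgroupOf]
  exact ⟨fun ⟨x, hx⟩ => mem_of_normalizerMulAut_eq_conj hx.symm,
    fun hα => ⟨_, (normalizerMulAut_of_mem hα).symm⟩⟩

variable [Finite N] {p : ℕ}

theorem exists_eq_conj_mul_normalizerMulAut (hN : IsPGroup p N) (hE : (Nat.card E).Coprime p)
    (ψ : MulAut (N ⋊[E.subtype] E)) :
    ∃ (x : N ⋊[E.subtype] E) (α : normalizer (E : Set (MulAut N))),
      ψ = MulAut.conj x * normalizerMulAut E α := by
  obtain ⟨α, hα⟩ := exists_mulAut_map_inl ψ (right_mulAut_inl_eq_one hN hE ψ)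
  set τ : E →* E := rightHom.comp (ψ.toMonoidHom.comp inr)
  set f : E → N := fun e => (ψ (inr e)).left
  have hψ : ∀ e, ψ (inr e) = inl (f e) * inr (τ e) := fun e => (inl_left_mul_inr_right _).symm
  obtain ⟨c, hc⟩ := hN.exists_eq_mul_inv_of_cocycle hE (E.subtype.comp τ) f fun a b => by
    show (ψ (inr (a * b))).left = (ψ (inr a)).left * E.subtype (ψ (inr a)).right (ψ (inr b)).left
    rw [map_mul, map_mul, mul_left]
  obtain ⟨hα', h⟩ := exists_eq_normalizerMulAut (χ := MulAut.conj (inl c) * ψ) (α := α)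
    (fun n => by ext <;> simp [hα]) (fun e => by simp [hψ, hc])
  refine ⟨(inl c)⁻¹, ⟨α, hα'⟩, ?_⟩
  rw [← h, ← mul_assoc, ← map_mul, inv_mul_cancel, map_one, one_mul]

theorem surjective_mk'_comp_normalizerMulAut (hN : IsPGroup p N) (hE : (Nat.card E).Coprime p) :
    Function.Surjective
      ((QuotientGroup.mk' (Inn (N ⋊[E.subtype] E))).comp (normalizerMulAut E)) := by
  intro q
  obtain ⟨ψ, rfl⟩ := QuotientGroup.mk_surjective q
  obtain ⟨x, α, rfl⟩ := exists_eq_conj_mul_normalizerMulAut hN hE ψ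
  refine ⟨α, ?_⟩
  rw [MonoidHom.comp_apply, QuotientGroup.mk'_apply, QuotientGroup.mk_mul,
    (QuotientGroup.eq_one_iff (N := Inn _) _).mpr ⟨x, rfl⟩, one_mul]

end

end SemidirectProduct

open SemidirectProduct

theorem stmt0_general (p : ℕ) (D : Type*) [CommGroup D] [Finite D]
    (hD : IsPGroup p D) (E : Subgroup (MulAut D)) (hE : (Nat.card E).Coprime p) :
    ∃ iso : ((Subgroup.normalizer (E : Set (MulAut D))) ⧸ E.subgroupOf (Subgroup.normalizer (E : Set (MulAut D)))) ≃* Out (D ⋊[E.subtype] E),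
      ∀ (α : MulAut D) (hα : α ∈ (Subgroup.normalizer (E : Set (MulAut D)))),
        ∃ ψ : MulAut (D ⋊[E.subtype] E),
          (∀ (d : D) (e : E),
              (ψ ⟨d, e⟩).left = α d ∧
              ((ψ ⟨d, e⟩).right : MulAut D) = α * (e : MulAut D) * α⁻¹) ∧
          iso (QuotientGroup.mk (⟨α, hα⟩ : (Subgroup.normalizer (E : Set (MulAut D))))) = QuotientGroup.mk ψ := by
  refine ⟨(QuotientGroup.quotientMulEquivOfEq (ker_mk'_comp_normalizerMulAut E).symm).trans
    (QuotientGroup.quotientKerEquivOfSurjective _ (surjective_mk'_comp_normalizerMulAut hD hE)),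
    fun α hα => ⟨normalizerMulAut E ⟨α, hα⟩, fun d e => ⟨rfl, rfl⟩, rfl⟩⟩

/-- Let `p` be a prime, `D` a finite abelian `p`-group, `E ≤ Aut(D)` of order
coprime to `p`, and `G = D ⋊ E`. Then `Out(G) ≅ N_{Aut(D)}(E)/E`, an isomorphism being induced
by sending `α ∈ N_{Aut(D)}(E)` to the class of the automorphism `(d, e) ↦ (α d, α ∘ e ∘ α⁻¹)`. -/
theorem stmt0 (p : ℕ) (hp : p.Prime) (D : Type*) [CommGroup D] [Finite D]
    (hD : IsPGroup p D) (E : Subgroup (MulAut D)) (hE : (Nat.card E).Coprime p) :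
    ∃ iso : ((Subgroup.normalizer (E : Set (MulAut D))) ⧸ E.subgroupOf (Subgroup.normalizer (E : Set (MulAut D)))) ≃* Out (D ⋊[E.subtype] E),
      ∀ (α : MulAut D) (hα : α ∈ (Subgroup.normalizer (E : Set (MulAut D)))),
        ∃ ψ : MulAut (D ⋊[E.subtype] E),
          (∀ (d : D) (e : E),
              (ψ ⟨d, e⟩).left = α d ∧
              ((ψ ⟨d, e⟩).right : MulAut D) = α * (e : MulAut D) * α⁻¹) ∧
          iso (QuotientGroup.mk (⟨α, hα⟩ : (Subgroup.normalizer (E : Set (MulAut D))))) = QuotientGroup.mk ψ :=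
  stmt0_general p D hD E hE
end

section
/- Let p be a prime, D a finite abelian p-group, E a subgroup of Aut(D) whose order is coprime to p, and G = D ⋊ E the semidirect product formed via the inclusion of E into Aut(D). If ψ is an automorphism of G which fixes D pointwise (i.e. ψ(d, 1) = (d, 1) for all d ∈ D), then there exists n ∈ D such that ψ is conjugation by the element (n, 1) of G; in particular ψ is an inner automorphism of G. -/
open SemidirectProduct

/-- Let `p` be a prime, `D` a finite abelian `p`-group, `E ≤ Aut(D)` of order
coprime to `p`, and `G = D ⋊ E`. If `ψ` is an automorphism of `G` fixing `D` pointwise, then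
`ψ` is conjugation by an element `(n, 1)` with `n ∈ D`; in particular `ψ` is inner. -/
theorem stmt1 (p : ℕ) (hp : p.Prime) (D : Type*) [CommGroup D] [Finite D]
    (hD : IsPGroup p D) (E : Subgroup (MulAut D)) (hE : (Nat.card E).Coprime p)
    (ψ : MulAut (D ⋊[E.subtype] E))
    (hψ : ∀ d : D, ψ (SemidirectProduct.inl d) = SemidirectProduct.inl d) :
    ∃ n : D, ∀ g : D ⋊[E.subtype] E,
      ψ g = SemidirectProduct.inl n * g * (SemidirectProduct.inl n)⁻¹ := by
  haveI : Fintype E := Fintype.ofFinite E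
  haveI := Fact.mk hp
  -- the right component of `ψ (inr e)` is `e`
  have hright : ∀ e : E, (ψ (inr e : D ⋊[E.subtype] E)).right = e := by
    intro e
    have key : ∀ d : D, ψ (inr e) * inl d * (ψ (inr e))⁻¹
        = (inl ((e : MulAut D) d) : D ⋊[E.subtype] E) := by
      intro d
      have h0 : (inr e * inl d * (inr e)⁻¹ : D ⋊[E.subtype] E)
          = inl (E.subtype e d) := by ext <;> simp
      calc ψ (inr e) * inl d * (ψ (inr e))⁻¹
          = ψ (inr e * inl d * (inr e)⁻¹) := by rw [map_mul, map_mul, map_inv, hψ]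
        _ = inl ((e : MulAut D) d) := by rw [h0]; exact hψ _
    have hd : ∀ d : D, ((ψ (inr e)).right : MulAut D) d = (e : MulAut D) d := by
      intro d
      have := congrArg SemidirectProduct.left (key d)
      simp only [mul_left, mul_right, inv_left, inv_right, left_inl, right_inl,
        mul_one, Subgroup.coe_subtype] at this
      simpa [mul_comm, mul_assoc, mul_left_comm] using this
    exact Subtype.ext (MulEquiv.ext hd)
  set a : E → D := fun e => (ψ (inr e)).left with ha_def
  have hcoc : ∀ e f : E, a (e * f) = a e * (e : MulAut D) (a f) := by
    intro e f
    have : ψ (inr (e * f)) = ψ (inr e) * ψ (inr f) := by rw [← map_mul, ← map_mul]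
    have := congrArg SemidirectProduct.left this
    simpa [ha_def, mul_left, hright e, Subgroup.coe_subtype] using this
  set m := Fintype.card E with hm
  set c : D := ∏ f : E, a f with hc
  have hsum : ∀ e : E, (a e) ^ m = c * ((e : MulAut D) c)⁻¹ := by
    intro e
    have h1 : c = ∏ f : E, a (e * f) :=
      (Equiv.prod_comp (Equiv.mulLeft e) a).symm
    have h2 : (∏ f : E, a (e * f)) = (a e) ^ m * (e : MulAut D) c := by
      simp only [hcoc]
      rw [Finset.prod_mul_distrib, Finset.prod_const, ← map_prod]
      simp [hm, hc]
    have h3 : c = (a e) ^ m * (e : MulAut D) c := h1.trans h2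
    rw [eq_mul_inv_iff_mul_eq]
    exact h3.symm
  have hcop : (Nat.card D).Coprime m := by
    obtain ⟨k, hk⟩ := IsPGroup.exists_card_eq hD
    rw [hk, hm, ← Nat.card_eq_fintype_card]
    exact Nat.Coprime.pow_left k hE.symm
  obtain ⟨n, hnm⟩ := hcop.pow_left_bijective.surjective c
  have ha : ∀ e : E, a e = n * ((e : MulAut D) n)⁻¹ := by
    intro e
    apply hcop.pow_left_bijective.injective
    show (a e) ^ m = (n * ((e : MulAut D) n)⁻¹) ^ m
    rw [hsum e, mul_pow, inv_pow, ← map_pow]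
    simp only at hnm
    rw [hnm]
  refine ⟨n, fun g => ?_⟩
  have hg : g = inl g.left * inr g.right := (inl_left_mul_inr_right g).symm
  have hpsir : ψ (inr g.right) = inl (a g.right) * inr g.right := by
    conv_lhs => rw [← inl_left_mul_inr_right (ψ (inr g.right))]
    rw [hright]
  rw [hg, map_mul, hψ, hpsir, ha]
  ext
  · simp only [mul_left, mul_right, left_inl, right_inl, left_inr, right_inr, inv_left,
      inv_right, mul_one, one_mul, map_one, map_inv, map_mul, Subgroup.coe_subtype,
      MulAut.one_apply]
    simp [mul_comm, mul_assoc, mul_left_comm]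
  · simp
end

section
/- Let p be a prime, P a finite abelian p-group, and H a subgroup of Aut(P) whose order is not divisible by p. Then the fixed-point subgroup C_P(H) = {x ∈ P : h(x) = x for all h ∈ H} is nontrivial if and only if there exists a nontrivial group homomorphism λ : P → ℂ^× such that λ∘h = λ for all h ∈ H. -/
section
variable {P : Type*} [CommGroup P] (H : Subgroup (MulAut P)) [Fintype H]

/-- The "norm" map `x ↦ ∏_{h ∈ H} h x`. -/
noncomputable def nmap (x : P) : P := ∏ h : H, (h : MulAut P) x

lemma nmap_comm (g : H) (x : P) : nmap H ((g : MulAut P) x) = nmap H x :=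
  Fintype.prod_equiv (Equiv.mulRight g)
    (fun h => (h : MulAut P) ((g : MulAut P) x)) (fun h => (h : MulAut P) x) (fun _ => rfl)

lemma nmap_fixed (g : H) (x : P) : (g : MulAut P) (nmap H x) = nmap H x := by
  unfold nmap
  rw [map_prod]
  exact Fintype.prod_equiv (Equiv.mulLeft g)
    (fun h => (g : MulAut P) ((h : MulAut P) x)) (fun h => (h : MulAut P) x) (fun _ => rfl)

lemma nmap_of_fixed (x : P) (hx : ∀ h ∈ H, h x = x) : nmap H x = x ^ Nat.card H := by
  unfold nmap
  rw [Finset.prod_congr rfl (fun h _ => hx h.1 h.2), Finset.prod_const, Nat.card_eq_fintype_card,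
    Finset.card_univ]

noncomputable def nmapHom : P →* P where
  toFun := nmap H
  map_one' := by unfold nmap; simp
  map_mul' x y := by
    unfold nmap
    rw [← Finset.prod_mul_distrib]
    exact Finset.prod_congr rfl (fun h _ => map_mul _ _ _)

end

lemma aux_pdvd {M : Type*} [Monoid M] {p n k : ℕ} (hp : p.Prime) {a : M} (ha : a ≠ 1)
    (hk : a ^ p ^ k = 1) (hn : a ^ n = 1) : p ∣ n := by
  have h1 : orderOf a ∣ p ^ k := orderOf_dvd_of_pow_eq_one hk
  obtain ⟨i, _, hi⟩ := (Nat.dvd_prime_pow hp).mp h1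
  have hi0 : i ≠ 0 := by
    rintro rfl
    exact ha (orderOf_eq_one_iff.mp (by simpa using hi))
  exact (hi ▸ dvd_pow_self p hi0).trans (orderOf_dvd_of_pow_eq_one hn)

/-- Let `p` be a prime, `P` a finite abelian `p`-group and `H ≤ Aut(P)` of
order not divisible by `p`. Then `C_P(H) ≠ 1` if and only if there is a nontrivial
`H`-invariant homomorphism `λ : P → ℂˣ`. -/
theorem stmt5 (p : ℕ) (hp : p.Prime) (P : Type*) [CommGroup P] [Finite P]
    (hP : IsPGroup p P) (H : Subgroup (MulAut P)) (hH : ¬ p ∣ Nat.card H) :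
    (∃ x : P, x ≠ 1 ∧ ∀ h ∈ H, h x = x) ↔
      (∃ lam : P →* ℂˣ, lam ≠ 1 ∧ ∀ h ∈ H, ∀ x : P, lam (h x) = lam x) := by
  haveI : Fintype H := Fintype.ofFinite H
  constructor
  · rintro ⟨x, hx1, hxfix⟩
    -- `N x = x ^ |H| ≠ 1` since `x` has `p`-power order coprime to `|H|`.
    have hNx : nmapHom H x = x ^ Nat.card H := nmap_of_fixed H x hxfix
    have hNx1 : nmapHom H x ≠ 1 := by
      rw [hNx]
      intro hcon
      obtain ⟨k, hk⟩ := hP x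
      exact hH (aux_pdvd hp hx1 hk hcon)
    obtain ⟨μ, hμ⟩ :=
      CommGroup.exists_apply_ne_one_of_hasEnoughRootsOfUnity P ℂ hNx1
    refine ⟨μ.comp (nmapHom H), ?_, ?_⟩
    · intro hcon
      apply hμ
      have : (μ.comp (nmapHom H)) x = (1 : P →* ℂˣ) x := by rw [hcon]
      simpa using this
    · intro h hh y
      simp only [MonoidHom.comp_apply]
      congr 1
      exact nmap_comm H ⟨h, hh⟩ y
  · rintro ⟨lam, hlam1, hinv⟩
    obtain ⟨y, hy⟩ : ∃ y : P, lam y ≠ 1 := by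
      by_contra hcon
      push_neg at hcon
      exact hlam1 (MonoidHom.ext fun y => by simpa using hcon y)
    refine ⟨nmap H y, ?_, fun h hh => nmap_fixed H ⟨h, hh⟩ y⟩
    intro hcon
    have hcalc : lam (nmap H y) = lam y ^ Nat.card H := by
      unfold nmap
      rw [map_prod, Finset.prod_congr rfl (fun h _ => hinv h.1 h.2 y), Finset.prod_const,
        Nat.card_eq_fintype_card, Finset.card_univ]
    rw [hcon, map_one] at hcalc
    obtain ⟨k, hk⟩ := hP y
    have hk' : lam y ^ p ^ k = 1 := by rw [← map_pow, hk, map_one]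
    exact hH (aux_pdvd hp hy hk' hcalc.symm)
end

section
/- The group GL_3(𝔽_2) of invertible 3×3 matrices over the field with two elements contains a nonabelian subgroup of order 21, and any two subgroups of GL_3(𝔽_2) of order 21 are conjugate in GL_3(𝔽_2). -/
/-!
A subgroup `H` of order `21 = 7 · 3` has a unique, hence normal, Sylow `7`-subgroup `P`, which is
also a Sylow subgroup of `GL₃(𝔽₂)` since `168 = 7 · 24`; so `H ≤ N(P)`. The Sylow count satisfies
`n₇ ∣ 24`, `n₇ ≡ 1 [MOD 7]` and `n₇ ≠ 1`, hence `n₇ = 8`, so every `N(P)` has order `168 / 8 = 21`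
and `H = N(P)`. Since Sylow subgroups are conjugate, so are their normalizers. Viewing `𝔽₂³` as
`𝔽₈`, the normalizer of the cyclic group generated by multiplication by a generator of `𝔽₈ˣ`
contains the Frobenius, which does not commute with it.
-/

open Subgroup

theorem Nat.factorization_prime_mul_of_not_dvd {p m : ℕ} (hp : p.Prime) (hm : ¬p ∣ m) :
    (p * m).factorization p = 1 := by
  have hm0 : m ≠ 0 := by rintro rfl; exact hm (dvd_zero p)
  rw [Nat.factorization_mul hp.ne_zero hm0, Finsupp.add_apply, hp.factorization_self,
    Nat.factorization_eq_zero_of_not_dvd hm]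

section Sylow

variable {G : Type*} [Group G] {p : ℕ}

theorem le_normalizer_of_card_sylow_eq_one {H : Subgroup G} (P : Sylow p G)
    (hPH : (P : Subgroup G) ≤ H) (hH : Nat.card (Sylow p H) = 1) :
    H ≤ normalizer (P : Set G) := by
  have : Subsingleton (Sylow p H) := (Nat.card_eq_one_iff_unique.mp hH).1
  have : ((P : Subgroup G).subgroupOf H).Normal :=
    Sylow.coe_subtype P hPH ▸ (P.subtype hPH).normal_of_subsingleton
  exact le_normalizer_of_normal_subgroupOf hPH

variable [Finite G] [hp : Fact p.Prime]

theorem card_sylow_dvd_of_card_eq_prime_mul {m : ℕ} (hG : Nat.card G = p * m) :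
    Nat.card (Sylow p G) ∣ m := by
  obtain ⟨P⟩ : Nonempty (Sylow p G) := inferInstance
  have hcoprime : Nat.Coprime (Nat.card (Sylow p G)) p :=
    ((Nat.Prime.coprime_iff_not_dvd hp.out).2 (not_dvd_card_sylow p G)).symm
  exact hcoprime.dvd_of_dvd_mul_left (hG ▸ P.card_dvd_index.trans (index_dvd_card _))

theorem card_sylow_eq_one_of_card_eq_prime_mul {m : ℕ} (hG : Nat.card G = p * m) (hm : m < p) :
    Nat.card (Sylow p G) = 1 := by
  have hm0 : 0 < m := Nat.pos_of_mul_pos_left (hG ▸ Nat.card_pos)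
  have hle : Nat.card (Sylow p G) ≤ m := Nat.le_of_dvd hm0 (card_sylow_dvd_of_card_eq_prime_mul hG)
  have hmod : Nat.card (Sylow p G) ≡ 1 [MOD p] := card_sylow_modEq_one p G
  rwa [Nat.ModEq, Nat.mod_eq_of_lt (by omega), Nat.mod_eq_of_lt hp.out.one_lt] at hmod

theorem Sylow.exists_le_of_factorization_card_eq {H : Subgroup G}
    (h : (Nat.card H).factorization p = (Nat.card G).factorization p) :
    ∃ P : Sylow p G, (P : Subgroup G) ≤ H := by
  obtain ⟨Q⟩ : Nonempty (Sylow p H) := inferInstance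
  refine ⟨Sylow.ofCard ((Q : Subgroup H).map H.subtype) ?_, map_subtype_le _⟩
  rw [card_map_of_injective H.subtype_injective, Q.card_eq_multiplicity, h]

theorem exists_eq_normalizer_sylow_of_card_eq_prime_mul {H : Subgroup G} {k m : ℕ}
    (hG : Nat.card G = p * m) (hpm : ¬p ∣ m) (hH : Nat.card H = p * k) (hk : k < p)
    (hN : ∀ P : Sylow p G, Nat.card (normalizer (P : Set G)) ≤ Nat.card H) :
    ∃ P : Sylow p G, H = normalizer (P : Set G) := by
  have hpk : ¬p ∣ k := Nat.not_dvd_of_pos_of_lt (Nat.pos_of_mul_pos_left (hH ▸ Nat.card_pos)) hk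
  obtain ⟨P, hPH⟩ := Sylow.exists_le_of_factorization_card_eq (p := p) (H := H) (by
    rw [hG, hH, Nat.factorization_prime_mul_of_not_dvd hp.out hpk,
      Nat.factorization_prime_mul_of_not_dvd hp.out hpm])
  have hHN : H ≤ normalizer (P : Set G) :=
    le_normalizer_of_card_sylow_eq_one P hPH (card_sylow_eq_one_of_card_eq_prime_mul hH hk)
  exact ⟨P, eq_of_le_of_card_ge hHN (hN P)⟩

theorem Sylow.exists_normalizer_eq_map_conj (P Q : Sylow p G) :
    ∃ g : G,
      normalizer (Q : Set G) = (normalizer (P : Set G)).map (MulAut.conj g).toMonoidHom := by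
  obtain ⟨g, rfl⟩ := MulAction.exists_smul_eq G P Q
  exact ⟨g, (map_equiv_normalizer_eq (P : Subgroup G) (MulAut.conj g)).symm⟩

end Sylow

namespace GL3F2

local notation "GL₃" => GL (Fin 3) (ZMod 2)

instance : Fact (Nat.Prime 7) := ⟨by norm_num⟩

theorem card_eq : Nat.card GL₃ = 7 * 24 := by
  rw [Matrix.card_GL_field]; decide

/- In the basis `1, α, α²` of `𝔽₈ = 𝔽₂(α)`, `α³ = α + 1`: multiplication by `α`, which generates
`𝔽₈ˣ ≅ ℤ/7`, and the Frobenius `z ↦ z²`. -/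
def singer : GL₃ := ⟨!![0,0,1;1,0,1;0,1,0], !![1,1,0;0,0,1;1,0,0], by decide, by decide⟩

def frobenius : GL₃ := ⟨!![1,0,0;0,0,1;0,1,1], !![1,0,0;0,1,1;0,1,0], by decide, by decide⟩

def transvection : GL₃ := ⟨!![1,1,0;0,1,0;0,0,1], !![1,1,0;0,1,0;0,0,1], by decide, by decide⟩

theorem orderOf_singer : orderOf singer = 7 :=
  orderOf_eq_prime (by decide) (by decide)

theorem frobenius_conj_singer : frobenius * singer * frobenius⁻¹ = singer ^ 2 := by decide

theorem transvection_conj_singer_notMem :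
    transvection * singer * transvection⁻¹ ∉ zpowers singer := by
  rw [mem_zpowers_iff_mem_range_orderOf, orderOf_singer]; decide

def singerSylow : Sylow 7 GL₃ :=
  Sylow.ofCard (zpowers singer) (by
    rw [Nat.card_zpowers, orderOf_singer, card_eq,
      Nat.factorization_prime_mul_of_not_dvd Fact.out (by norm_num), pow_one])

theorem card_sylow_seven : Nat.card (Sylow 7 GL₃) = 8 := by
  have hdvd : Nat.card (Sylow 7 GL₃) ∣ 24 := card_sylow_dvd_of_card_eq_prime_mul card_eq
  have hmod : Nat.card (Sylow 7 GL₃) ≡ 1 [MOD 7] := card_sylow_modEq_one 7 GL₃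
  have hne : Nat.card (Sylow 7 GL₃) ≠ 1 := fun h => by
    have : Subsingleton (Sylow 7 GL₃) := (Nat.card_eq_one_iff_unique.mp h).1
    exact transvection_conj_singer_notMem
      (singerSylow.normal_of_subsingleton.conj_mem _ (mem_zpowers singer) transvection)
  have hle : Nat.card (Sylow 7 GL₃) ≤ 24 := Nat.le_of_dvd (by norm_num) hdvd
  unfold Nat.ModEq at hmod
  interval_cases Nat.card (Sylow 7 GL₃) <;> omega

theorem card_normalizer_sylow_seven (P : Sylow 7 GL₃) :
    Nat.card (normalizer (P : Set GL₃)) = 21 := by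
  have h := card_mul_index (normalizer (P : Set GL₃))
  rw [← P.card_eq_index_normalizer, card_sylow_seven, card_eq] at h
  omega

theorem frobenius_mem_normalizer : frobenius ∈ normalizer (singerSylow : Set GL₃) := by
  refine mem_normalizer_fintype fun n hn => ?_
  obtain ⟨k, rfl⟩ := mem_zpowers_iff.mp hn
  show frobenius * singer ^ k * frobenius⁻¹ ∈ zpowers singer
  rw [← conj_zpow, frobenius_conj_singer]
  exact zpow_mem (pow_mem (mem_zpowers singer) 2) k

theorem not_commute_normalizer_singerSylow :
    ¬∀ x y : normalizer (singerSylow : Set GL₃), x * y = y * x := fun h => by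
  have := congrArg Subtype.val
    (h ⟨singer, le_normalizer (mem_zpowers singer)⟩ ⟨frobenius, frobenius_mem_normalizer⟩)
  exact absurd this (by decide)

end GL3F2

/-- `GL_3(𝔽₂)` contains a nonabelian subgroup of order `21`, and any two
subgroups of `GL_3(𝔽₂)` of order `21` are conjugate. -/
theorem stmt9 :
    (∃ H : Subgroup (GL (Fin 3) (ZMod 2)),
        Nat.card H = 21 ∧ ¬ (∀ x y : H, x * y = y * x)) ∧
    (∀ H K : Subgroup (GL (Fin 3) (ZMod 2)), Nat.card H = 21 → Nat.card K = 21 →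
        ∃ g : GL (Fin 3) (ZMod 2), K = H.map (MulAut.conj g).toMonoidHom) := by
  have eq_normalizer : ∀ H : Subgroup (GL (Fin 3) (ZMod 2)), Nat.card H = 21 →
      ∃ P : Sylow 7 (GL (Fin 3) (ZMod 2)), H = normalizer (P : Set (GL (Fin 3) (ZMod 2))) :=
    fun H hH => exists_eq_normalizer_sylow_of_card_eq_prime_mul (k := 3) GL3F2.card_eq
      (by norm_num) hH (by norm_num) fun P => (GL3F2.card_normalizer_sylow_seven P).trans_le hH.ge
  refine ⟨⟨_, GL3F2.card_normalizer_sylow_seven GL3F2.singerSylow,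
    GL3F2.not_commute_normalizer_singerSylow⟩, fun H K hH hK => ?_⟩
  obtain ⟨P, rfl⟩ := eq_normalizer H hH
  obtain ⟨Q, rfl⟩ := eq_normalizer K hK
  exact P.exists_normalizer_eq_map_conj Q
end

section
/- Every subgroup H of GL_3(𝔽_2) of order 21 is a maximal subgroup (i.e. H ≠ GL_3(𝔽_2) and the only subgroups of GL_3(𝔽_2) containing H are H and GL_3(𝔽_2) itself) and is self-normalizing: N_{GL_3(𝔽_2)}(H) = H. -/
/-!
A companion matrix of the primitive polynomial `X³ + X + 1` and its transpose have order `7` and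
do not commute, so `GL₃(𝔽₂)` has more than one, hence `8`, Sylow `7`-subgroups, and their
normalizers have order `21`. For a Sylow subgroup `P ≤ K` the Sylow count of `K` is
`[K : N(P) ⊓ K] ≡ 1 mod 7`. A subgroup `H` of order `21` contains some `P`, and this count
divides `21`, so `H = N(P)`. For `N(P) ≤ K` it is `[K : N(P)]`, a divisor of `168`, hence `1` or
`8`. Finally, normalizers of Sylow subgroups are self-normalizing.
-/

open Subgroup

namespace Sylow

variable {G : Type*} [Group G] [Finite G] {p : ℕ}

theorem card_eq_of_dvd_of_not_sq_dvd [Fact p.Prime] (P : Sylow p G) (h : p ∣ Nat.card G)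
    (h2 : ¬p ^ 2 ∣ Nat.card G) : Nat.card P = p := by
  obtain ⟨n, hn⟩ := IsPGroup.iff_card.mp P.isPGroup'
  have hp_dvd : p ∣ p ^ n := hn ▸ P.dvd_card_of_dvd_card h
  have hpow_dvd : p ^ n ∣ Nat.card G := hn ▸ P.1.card_subgroup_dvd_card
  rcases n with _ | _ | n
  · exact absurd (Nat.le_of_dvd one_pos hp_dvd) (Fact.out : p.Prime).one_lt.not_ge
  · rw [hn, pow_one]
  · exact absurd ((pow_dvd_pow p (by omega)).trans hpow_dvd) h2

theorem exists_coe_eq_zpowers (hcard : ∀ P : Sylow p G, Nat.card P = p) {g : G}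
    (hg : orderOf g = p) : ∃ P : Sylow p G, (P : Subgroup G) = zpowers g := by
  have hg' : Nat.card (zpowers g) = p := by rw [Nat.card_zpowers, hg]
  obtain ⟨P, hP⟩ := (IsPGroup.of_card (n := 1) (by rw [hg', pow_one])).exists_le_sylow
  exact ⟨P, (eq_of_le_of_card_ge hP (by rw [hcard, hg'])).symm⟩

theorem nontrivial_of_not_commute (hcard : ∀ P : Sylow p G, Nat.card P = p) {a b : G}
    (ha : orderOf a = p) (hb : orderOf b = p) (hab : ¬Commute a b) : Nontrivial (Sylow p G) := by
  obtain ⟨P, hP⟩ := exists_coe_eq_zpowers hcard ha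
  obtain ⟨Q, hQ⟩ := exists_coe_eq_zpowers hcard hb
  refine ⟨P, Q, fun hPQ => hab ?_⟩
  obtain ⟨k, rfl⟩ := mem_zpowers_iff.mp (hP ▸ hPQ ▸ hQ ▸ mem_zpowers b)
  exact (Commute.refl a).zpow_right k

theorem exists_le_of_dvd_card [Fact p.Prime] (hcard : ∀ P : Sylow p G, Nat.card P = p)
    {K : Subgroup G} (hK : p ∣ Nat.card K) : ∃ P : Sylow p G, ↑P ≤ K := by
  obtain ⟨g, hg⟩ := exists_prime_orderOf_dvd_card' p hK
  obtain ⟨P, hP⟩ := exists_coe_eq_zpowers hcard ((orderOf_submonoid g).trans hg)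
  exact ⟨P, hP ▸ zpowers_le.mpr g.2⟩

/-- `P` is a Sylow subgroup of `K`, whose normalizer in `K` is `normalizer P ⊓ K`; so this
relative index is the number of Sylow `p`-subgroups of `K`. -/
theorem relIndex_normalizer_modEq_one [Fact p.Prime] (P : Sylow p G) {K : Subgroup G}
    (hPK : ↑P ≤ K) :
    (normalizer (P : Set G)).relIndex K ≡ 1 [MOD p] := by
  have := card_sylow_modEq_one p K
  rwa [(P.subtype hPK).card_eq_index_normalizer, ← Sylow.coe_coe, coe_subtype,
    ← subgroupOf_normalizer_eq hPK] at this

end Sylow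

local notation "GL₃𝔽₂" => GL (Fin 3) (ZMod 2)

instance fact_prime_seven : Fact (Nat.Prime 7) := ⟨by norm_num⟩

theorem card_GL_fin_three_zmod_two : Nat.card GL₃𝔽₂ = 168 := by
  rw [Matrix.card_GL_field]
  simp [Fin.prod_univ_three, ZMod.card]

theorem eq_one_or_eq_eight_of_dvd_168 {n : ℕ} (hn : n ∣ 168) (h : n ≡ 1 [MOD 7]) :
    n = 1 ∨ n = 8 :=
  (by decide : ∀ n ∈ Nat.divisors 168, n ≡ 1 [MOD 7] → n = 1 ∨ n = 8) n
    (Nat.mem_divisors.mpr ⟨hn, by norm_num⟩) h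

theorem card_sylow_seven_subgroup (P : Sylow 7 GL₃𝔽₂) : Nat.card P = 7 :=
  P.card_eq_of_dvd_of_not_sq_dvd (by rw [card_GL_fin_three_zmod_two]; norm_num)
    (by rw [card_GL_fin_three_zmod_two]; norm_num)

/-- The companion matrix of `X³ + X + 1`, primitive over `𝔽₂`; hence of order `7`. -/
def companion : Matrix (Fin 3) (Fin 3) (ZMod 2) := !![0, 1, 0; 0, 0, 1; 1, 1, 0]

def companionGL : GL₃𝔽₂ := Units.ofPowEqOne companion 7 (by decide) (by decide)

def companionTransposeGL : GL₃𝔽₂ :=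
  Units.ofPowEqOne companion.transpose 7 (by decide) (by decide)

theorem not_commute_companionGL_companionTransposeGL :
    ¬Commute companionGL companionTransposeGL := by
  simp only [Commute, SemiconjBy]
  decide

theorem nontrivial_sylow_seven : Nontrivial (Sylow 7 GL₃𝔽₂) :=
  Sylow.nontrivial_of_not_commute card_sylow_seven_subgroup
    (orderOf_eq_prime (by decide) (by decide)) (orderOf_eq_prime (by decide) (by decide))
    not_commute_companionGL_companionTransposeGL

theorem card_sylow_seven : Nat.card (Sylow 7 GL₃𝔽₂) = 8 := by
  obtain ⟨P⟩ : Nonempty (Sylow 7 GL₃𝔽₂) := inferInstance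
  have hdvd : Nat.card (Sylow 7 GL₃𝔽₂) ∣ 168 := by
    rw [P.card_eq_index_normalizer, ← card_GL_fin_three_zmod_two]
    exact index_dvd_card _
  have hne : Nat.card (Sylow 7 GL₃𝔽₂) ≠ 1 :=
    (Finite.one_lt_card_iff_nontrivial.mpr nontrivial_sylow_seven).ne'
  exact (eq_one_or_eq_eight_of_dvd_168 hdvd (card_sylow_modEq_one 7 _)).resolve_left hne

theorem card_normalizer_sylow_seven (P : Sylow 7 GL₃𝔽₂) :
    Nat.card (normalizer (P : Set GL₃𝔽₂)) = 21 := by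
  have := (normalizer (P : Set GL₃𝔽₂)).index_mul_card
  rw [← P.card_eq_index_normalizer, card_sylow_seven, card_GL_fin_three_zmod_two] at this
  omega

theorem exists_normalizer_sylow_seven_eq (H : Subgroup GL₃𝔽₂) (hH : Nat.card H = 21) :
    ∃ P : Sylow 7 GL₃𝔽₂, normalizer (P : Set GL₃𝔽₂) = H := by
  obtain ⟨P, hPH⟩ := Sylow.exists_le_of_dvd_card card_sylow_seven_subgroup (K := H) (by
    rw [hH]; norm_num)
  have hdvd : (normalizer (P : Set GL₃𝔽₂)).relIndex H ∣ 21 := hH ▸ relIndex_dvd_card _ _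
  have hle : H ≤ normalizer (P : Set GL₃𝔽₂) := by
    rw [← relIndex_eq_one]
    rcases eq_one_or_eq_eight_of_dvd_168 (hdvd.trans (by norm_num))
      (P.relIndex_normalizer_modEq_one hPH) with h | h
    · exact h
    · rw [h] at hdvd; norm_num at hdvd
  exact ⟨P, (eq_of_le_of_card_ge hle (by rw [hH, card_normalizer_sylow_seven])).symm⟩

theorem eq_or_eq_top_of_normalizer_sylow_seven_le (P : Sylow 7 GL₃𝔽₂) {K : Subgroup GL₃𝔽₂}
    (hK : normalizer (P : Set GL₃𝔽₂) ≤ K) : K = normalizer (P : Set GL₃𝔽₂) ∨ K = ⊤ := by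
  have hcard := relIndex_mul_relIndex ⊥ _ K bot_le hK
  rw [relIndex_bot_left, relIndex_bot_left, card_normalizer_sylow_seven] at hcard
  have hdvd : (normalizer (P : Set GL₃𝔽₂)).relIndex K ∣ 168 :=
    (relIndex_dvd_card _ _).trans (card_GL_fin_three_zmod_two ▸ card_subgroup_dvd_card K)
  rcases eq_one_or_eq_eight_of_dvd_168 hdvd
    (P.relIndex_normalizer_modEq_one (le_normalizer.trans hK)) with h | h
  · exact .inl (le_antisymm (relIndex_eq_one.mp h) hK)
  · exact .inr (eq_top_of_card_eq K (by rw [← hcard, h, card_GL_fin_three_zmod_two]))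

/-- Every subgroup `H` of `GL_3(𝔽₂)` of order `21` is a maximal subgroup
and is self-normalizing: `N_{GL_3(𝔽₂)}(H) = H`. -/
theorem stmt10 (H : Subgroup (GL (Fin 3) (ZMod 2))) (hH : Nat.card H = 21) :
    (H ≠ ⊤ ∧ ∀ K : Subgroup (GL (Fin 3) (ZMod 2)), H ≤ K → K = H ∨ K = ⊤) ∧
    Subgroup.normalizer (H : Set (GL (Fin 3) (ZMod 2))) = H := by
  obtain ⟨P, rfl⟩ := exists_normalizer_sylow_seven_eq H hH
  refine ⟨⟨fun htop => ?_, fun K hK => eq_or_eq_top_of_normalizer_sylow_seven_le P hK⟩,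
    P.normalizer_normalizer⟩
  rw [htop, card_top, card_GL_fin_three_zmod_two] at hH
  exact absurd hH (by norm_num)
end

section
/- Let n ≥ 1 and let E be a nonabelian subgroup of GL_3(ℤ/2^nℤ) of order 21. Then the quotient N_{GL_3(ℤ/2^nℤ)}(E)/E of the normalizer of E by E is a 2-group (its order is a power of 2). -/
/-!
Reduction mod `2` maps `GL₃(ℤ/2ⁿ)` into `GL₃(𝔽₂)`, whose order is
`168 = 2³ · 21`, and its kernel consists of matrices `1 + 2A`, all of whose `2ⁿ`-th powers are `1`.
Hence `|GL₃(ℤ/2ⁿ)|` divides `21 · 2ᶜ`, so the index of `E` in `GL₃(ℤ/2ⁿ)` is a power of `2`,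
and so is `[N(E) : E]`, which divides it.
-/

open Polynomial in
theorem one_add_natCast_mul_pow_pow_eq_one {R : Type*} [Ring R] {p n : ℕ} (hp : (p : R) ^ n = 0)
    (x : R) : (1 + p * x) ^ p ^ n = 1 := by
  -- `R` need not be commutative, so the divisibility is proved in `ℤ[X]` and evaluated at `x`.
  obtain ⟨q, hq⟩ : (p : ℤ[X]) ^ (n + 1) ∣ (1 + (p : ℤ[X]) * X) ^ p ^ n - 1 ^ p ^ n :=
    dvd_sub_pow_of_dvd_sub (by simp) n
  have := congrArg (aeval x) hq
  simp only [map_sub, map_pow, map_add, map_one, map_mul, map_natCast, aeval_X, one_pow] at this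
  rw [← sub_eq_zero, this, pow_succ, hp, zero_mul, zero_mul]

theorem ZMod.exists_eq_mul_of_castHom_eq_zero {p n : ℕ} (hn : n ≠ 0) {y : ZMod (p ^ n)}
    (hy : ZMod.castHom (dvd_pow_self p hn) (ZMod p) y = 0) : ∃ z, y = p * z := by
  rw [← ZMod.intCast_zmod_cast y, map_intCast, ZMod.intCast_zmod_eq_zero_iff_dvd] at hy
  obtain ⟨w, hw⟩ := hy
  exact ⟨w, by rw [← ZMod.intCast_zmod_cast y, hw, Int.cast_mul, Int.cast_natCast]⟩

theorem Matrix.GeneralLinearGroup.isPGroup_ker_map_castHom {ι : Type*} [Fintype ι] [DecidableEq ι]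
    {p n : ℕ} (hn : n ≠ 0) :
    IsPGroup p (map (n := ι) (ZMod.castHom (dvd_pow_self p hn) (ZMod p))).ker := by
  rintro ⟨g, hg⟩
  refine ⟨n, Subtype.ext (Units.ext ?_)⟩
  have hentry : ∀ i j, ∃ z, g i j - (1 : Matrix ι ι (ZMod (p ^ n))) i j = p * z := by
    intro i j
    apply ZMod.exists_eq_mul_of_castHom_eq_zero hn
    have h : ZMod.castHom (dvd_pow_self p hn) (ZMod p) (g i j) = (1 : Matrix ι ι (ZMod p)) i j :=
      congrArg (fun M : GL ι (ZMod p) => (M : Matrix ι ι (ZMod p)) i j) hg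
    rw [map_sub, h]
    rcases eq_or_ne i j with rfl | hij <;> simp [*]
  choose z hz using hentry
  have hg : (g : Matrix ι ι (ZMod (p ^ n))) = 1 + p • Matrix.of z := by
    ext i j
    simp [← hz]
  have hp : (p : Matrix ι ι (ZMod (p ^ n))) ^ n = 0 := by
    rw [← Nat.cast_pow, ← map_natCast (algebraMap (ZMod (p ^ n)) _), ZMod.natCast_self, map_zero]
  simp only [Subgroup.coe_pow, Units.val_pow_eq_pow_val, Subgroup.coe_one, Units.val_one]
  rw [hg, nsmul_eq_mul, one_add_natCast_mul_pow_pow_eq_one hp]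

theorem Matrix.GeneralLinearGroup.exists_card_dvd_card_mul_pow {ι : Type*} [Fintype ι]
    [DecidableEq ι] {p n : ℕ} [Fact p.Prime] (hn : n ≠ 0) :
    ∃ b, Nat.card (GL ι (ZMod (p ^ n))) ∣ Nat.card (GL ι (ZMod p)) * p ^ b := by
  let φ : GL ι (ZMod (p ^ n)) →* GL ι (ZMod p) := map (ZMod.castHom (dvd_pow_self p hn) _)
  obtain ⟨b, hb⟩ := (isPGroup_ker_map_castHom hn : IsPGroup p φ.ker).exists_card_eq
  refine ⟨b, ?_⟩
  rw [← φ.ker.card_mul_index, Subgroup.index_ker, hb, mul_comm]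
  exact mul_dvd_mul_right (Subgroup.card_subgroup_dvd_card _) _

theorem card_GL_three_zmod_two : Nat.card (GL (Fin 3) (ZMod 2)) = 21 * 2 ^ 3 := by
  rw [Matrix.card_GL_field]
  simp [Fin.prod_univ_three, ZMod.card]

theorem stmt15_general (n : ℕ) (hn : 1 ≤ n) (E : Subgroup (GL (Fin 3) (ZMod (2 ^ n))))
    (hE : Nat.card E = 21) :
    ∃ a : ℕ, Nat.card ((Subgroup.normalizer (E : Set (GL (Fin 3) (ZMod (2 ^ n))))) ⧸ E.subgroupOf (Subgroup.normalizer (E : Set (GL (Fin 3) (ZMod (2 ^ n)))))) = 2 ^ a := by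
  obtain ⟨b, hb⟩ := Matrix.GeneralLinearGroup.exists_card_dvd_card_mul_pow (ι := Fin 3) (p := 2)
    (by omega : n ≠ 0)
  have hindex : E.index ∣ 2 ^ (3 + b) := by
    rw [← E.card_mul_index, hE, card_GL_three_zmod_two, mul_assoc, ← pow_add] at hb
    exact Nat.dvd_of_mul_dvd_mul_left (by norm_num) hb
  obtain ⟨a, -, ha⟩ := (Nat.dvd_prime_pow Nat.prime_two).1
    ((E.relIndex_dvd_index_of_le E.le_normalizer).trans hindex)
  exact ⟨a, ha⟩

/-- Let `n ≥ 1` and `E` a nonabelian subgroup of `GL_3(ℤ/2^nℤ)` of order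
`21`. Then `N_{GL_3(ℤ/2^nℤ)}(E)/E` is a `2`-group. -/
theorem stmt15 (n : ℕ) (hn : 1 ≤ n) (E : Subgroup (GL (Fin 3) (ZMod (2 ^ n))))
    (hE : Nat.card E = 21) (hNA : ¬ (∀ x y : E, x * y = y * x)) :
    ∃ a : ℕ, Nat.card ((Subgroup.normalizer (E : Set (GL (Fin 3) (ZMod (2 ^ n))))) ⧸ E.subgroupOf (Subgroup.normalizer (E : Set (GL (Fin 3) (ZMod (2 ^ n)))))) = 2 ^ a :=
  stmt15_general n hn E hE
end
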